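/- Let r ≥ 2 and s with r ≡ −1 (mod s), i.e. r = r′s + s − 1 for some r′ ≥ 0. For m ∈ {1,...,r−1} write m = m′s + m″ with m″ ∈ {0,...,s−1}, and set ℓ(m) = r − m′ − (r′+1)m″. Then Σ_{m=1}^{r−1} m(r−m)(r − 1 − 2ℓ(m)) = −r(r²−1)/6. -/

import Mathlib

open Finset

/-!
Since `r + 1 = (r' + 1) s`, the digits of `m` and of `r - m` in the mixed representation
`m = m' s + m''` add up without carry, to `r'` and `s - 1` respectively. Hence
`ℓ(m) + ℓ(r - m) = r`, so the factor `r - 1 - 2ℓ(m)` averages to `-1` under the reflection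
`m ↦ r - m`, which preserves the weight `m (r - m)`. The sum is therefore `-∑ m (r - m)`,
and `∑_{m=0}^{r} m (r - m) = r (r² - 1) / 6`.
-/

namespace Nat

theorem mod_add_mod_of_add_mod_eq_pred {x y s : ℕ} (hs : 0 < s) (h : (x + y) % s = s - 1) :
    x % s + y % s = s - 1 := by
  have hx := x.mod_lt hs
  have hy := y.mod_lt hs
  have := add_mod_add_ite x y s
  split_ifs at this <;> omega

theorem div_add_div_of_add_mod_eq_pred {x y s : ℕ} (hs : 0 < s) (h : (x + y) % s = s - 1) :
    x / s + y / s = (x + y) / s :=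
  (add_div_eq_of_add_mod_lt (by rw [mod_add_mod_of_add_mod_eq_pred hs h]; omega)).symm

end Nat

theorem sum_range_mul_reflect {R : Type*} [CommRing R] {n : ℕ} {w g : ℕ → R} {c : R}
    (hw : ∀ m ≤ n, w (n - m) = w m) (hg : ∀ m ≤ n, g m + g (n - m) = c) :
    2 * ∑ m ∈ range (n + 1), w m * g m = c * ∑ m ∈ range (n + 1), w m := by
  have hreflect : ∑ m ∈ range (n + 1), w m * g m = ∑ m ∈ range (n + 1), w m * g (n - m) := by
    rw [← sum_range_reflect]
    refine sum_congr rfl fun m hm => ?_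
    have hm : m ≤ n := Nat.lt_succ_iff.mp (mem_range.mp hm)
    rw [add_tsub_cancel_right, hw m hm]
  rw [two_mul]
  nth_rw 2 [hreflect]
  rw [← sum_add_distrib, mul_sum]
  refine sum_congr rfl fun m hm => ?_
  rw [← mul_add, hg m (Nat.lt_succ_iff.mp (mem_range.mp hm)), mul_comm]

theorem sum_range_cast_mul_sub (n : ℕ) :
    ∑ m ∈ range (n + 1), (m : ℚ) * (n - m) = n * (n ^ 2 - 1) / 6 := by
  induction n with
  | zero => simp
  | succ n ih =>
    have hgauss : ∑ m ∈ range (n + 1), (m : ℚ) = n * (n + 1) / 2 := by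
      have := congrArg (Nat.cast : ℕ → ℚ) (sum_range_id_mul_two (n + 1))
      push_cast at this
      linarith
    rw [sum_range_succ]
    simp only [Nat.cast_add_one, sub_self, mul_zero, add_zero, add_sub_right_comm, mul_add_one,
      sum_add_distrib, ih, hgauss]
    ring

theorem sum_Icc_one_sub_one_eq_sum_range {M : Type*} [AddCommMonoid M] {n : ℕ} {f : ℕ → M}
    (h₀ : f 0 = 0) (hn : f n = 0) :
    ∑ m ∈ Icc 1 (n - 1), f m = ∑ m ∈ range (n + 1), f m := by
  refine sum_subset (fun m hm => ?_) fun m hm hm' => ?_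
  · simp only [mem_Icc, mem_range] at hm ⊢
    omega
  · simp only [mem_Icc, mem_range, not_and_or, not_le] at hm hm'
    obtain rfl | rfl : m = 0 ∨ m = n := by omega
    exacts [h₀, hn]

def ell (r r' s m : ℕ) : ℚ := r - (m / s : ℕ) - (r' + 1) * (m % s : ℕ)

theorem ell_add_ell_sub {r r' s m : ℕ} (hrs : r + 1 = (r' + 1) * s) (hm : m ≤ r) :
    ell r r' s m + ell r r' s (r - m) = r := by
  have hs : 0 < s := Nat.pos_of_ne_zero fun h => by simp [h] at hrs
  have hr : r = s * r' + (s - 1) := by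
    zify [hs] at hrs ⊢
    linear_combination hrs
  have hrmod : r % s = s - 1 := by rw [hr, Nat.mul_add_mod, Nat.mod_eq_of_lt (by omega)]
  have hrdiv : r / s = r' := by rw [hr, Nat.mul_add_div hs, Nat.div_eq_of_lt (by omega), add_zero]
  rw [← Nat.sub_add_cancel hm] at hrmod hrdiv
  have hmod := Nat.mod_add_mod_of_add_mod_eq_pred hs hrmod
  have hdiv := (Nat.div_add_div_of_add_mod_eq_pred hs hrmod).trans hrdiv
  have hmodq : (((r - m) % s : ℕ) : ℚ) + ((m % s : ℕ) : ℚ) = s - 1 := by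
    rw [← Nat.cast_add, hmod, Nat.cast_pred hs]
  have hdivq : (((r - m) / s : ℕ) : ℚ) + ((m / s : ℕ) : ℚ) = r' := by
    rw [← Nat.cast_add, hdiv]
  have hrq : (r : ℚ) + 1 = (r' + 1) * s := by exact_mod_cast hrs
  unfold ell
  linear_combination -hdivq - (r' + 1 : ℚ) * hmodq + hrq

theorem cubic_sum_case_minus_general (r s r' : ℕ)
    (hrs : r = r' * s + s - 1) :
    ∑ m ∈ Finset.Icc 1 (r - 1),
        (m : ℚ) * ((r : ℚ) - m) *
          ((r : ℚ) - 1 - 2 * ((r : ℚ) - (((m / s : ℕ)) : ℚ)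
            - ((r' : ℚ) + 1) * (((m % s : ℕ)) : ℚ))) =
      -(r : ℚ) * ((r : ℚ) ^ 2 - 1) / 6 := by
  obtain rfl | hs := s.eq_zero_or_pos
  · obtain rfl : r = 0 := by simpa using hrs
    simp
  have hq : r + 1 = (r' + 1) * s := by rw [hrs, add_one_mul, Nat.sub_add_cancel (by nlinarith)]
  change ∑ m ∈ Icc 1 (r - 1), (m : ℚ) * (r - m) * (r - 1 - 2 * ell r r' s m) = _
  rw [sum_Icc_one_sub_one_eq_sum_range (by simp) (by simp)]
  have hpair := sum_range_mul_reflect (n := r) (w := fun m => (m : ℚ) * (r - m))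
    (g := fun m => (r : ℚ) - 1 - 2 * ell r r' s m) (c := -2)
    (fun m hm => by push_cast [Nat.cast_sub hm]; ring)
    (fun m hm => by linear_combination -2 * ell_add_ell_sub hq hm)
  rw [sum_range_cast_mul_sub] at hpair
  linear_combination hpair / 2

/-- for `r = r's + s - 1`, writing `m = m's + m''` with `m'' ∈ {0,…,s-1}` and
`ℓ(m) = r - m' - (r'+1)m''`, one has `∑_{m=1}^{r-1} m(r-m)(r-1-2ℓ(m)) = -r(r²-1)/6`. -/
theorem cubic_sum_case_minus (r s r' : ℕ) (hr : 2 ≤ r) (hs : 1 ≤ s)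
    (hrs : r = r' * s + s - 1) :
    ∑ m ∈ Finset.Icc 1 (r - 1),
        (m : ℚ) * ((r : ℚ) - m) *
          ((r : ℚ) - 1 - 2 * ((r : ℚ) - (((m / s : ℕ)) : ℚ)
            - ((r' : ℚ) + 1) * (((m % s : ℕ)) : ℚ))) =
      -(r : ℚ) * ((r : ℚ) ^ 2 - 1) / 6 :=
  cubic_sum_case_minus_general r s r' hrs
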